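/- The operator V = (Mᴴ ⊗ Mᴴ)·Λ·(P(α) ⊗ P(β))·(M ⊗ M), where M is any unitary 2×2 matrix, Λ = diag(1,1,1,e^{iφ}), and P(θ) = diag(1,e^{iθ}), satisfies all directed consistency conditions: (D2) V·(S·V·S) = (S·V·S)·V; and on three qubits, with V' = S·V·S, (D3a) (V⊗I)·(I⊗V) = (I⊗V)·(V⊗I), (D3b) (V⊗I)·(I⊗V') = (I⊗V')·(V⊗I), and (D3c) (V'⊗I)·(I⊗V) = (I⊗V)·(V'⊗I). Hence V is a unitary edge operator for directed graphs. -/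

import Mathlib

open Matrix Kronecker

/-- The swap operator on two qubits. -/
def swapOp : Matrix (Fin 2 × Fin 2) (Fin 2 × Fin 2) ℂ :=
  fun p q => if p.1 = q.2 ∧ p.2 = q.1 then 1 else 0

/-- The single-qubit phase gate `P(θ) = diag(1, e^{iθ})`. -/
noncomputable def phaseGate (θ : ℝ) : Matrix (Fin 2) (Fin 2) ℂ :=
  !![1, 0; 0, Complex.exp (θ * Complex.I)]

/-- The controlled phase `Λ = diag(1,1,1,e^{iφ})`. -/
noncomputable def cPhase (φ : ℝ) : Matrix (Fin 2 × Fin 2) (Fin 2 × Fin 2) ℂ :=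
  Matrix.diagonal (fun p => if p = (1, 1) then Complex.exp (φ * Complex.I) else 1)

/-- The directed edge operator `V = (Mᴴ⊗Mᴴ) Λ (P(α)⊗P(β)) (M⊗M)`. -/
noncomputable def Vdir (M : Matrix (Fin 2) (Fin 2) ℂ) (α β φ : ℝ) :
    Matrix (Fin 2 × Fin 2) (Fin 2 × Fin 2) ℂ :=
  (Mᴴ ⊗ₖ Mᴴ) * cPhase φ * (phaseGate α ⊗ₖ phaseGate β) * (M ⊗ₖ M)

/-- `W ⊗ I` acting on qubits 1,2 of three qubits (reindexed to match `I ⊗ W`). -/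
def opOn12 (W : Matrix (Fin 2 × Fin 2) (Fin 2 × Fin 2) ℂ) :
    Matrix (Fin 2 × Fin 2 × Fin 2) (Fin 2 × Fin 2 × Fin 2) ℂ :=
  Matrix.reindex (Equiv.prodAssoc (Fin 2) (Fin 2) (Fin 2))
    (Equiv.prodAssoc (Fin 2) (Fin 2) (Fin 2)) (W ⊗ₖ (1 : Matrix (Fin 2) (Fin 2) ℂ))

/-- `I ⊗ W` acting on qubits 2,3 of three qubits. -/
def opOn23 (W : Matrix (Fin 2 × Fin 2) (Fin 2 × Fin 2) ℂ) :
    Matrix (Fin 2 × Fin 2 × Fin 2) (Fin 2 × Fin 2 × Fin 2) ℂ :=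
  (1 : Matrix (Fin 2) (Fin 2) ℂ) ⊗ₖ W

/-!
Writing `U = M ⊗ M`, the operator is `V = Uᴴ D U` with `D = Λ (P(α) ⊗ P(β))` diagonal, and
conjugating by the swap just exchanges `α` and `β`, so every condition compares two operators of
the same shape. On two qubits they are simultaneously diagonalised by `U`. On three qubits, the
extra single-qubit factor of `M ⊗ M ⊗ M` commutes with `W ⊗ I` (resp. `I ⊗ W`), so both
`(Uᴴ D U) ⊗ I` and `I ⊗ (Uᴴ D' U)` are conjugates of diagonal matrices by `M ⊗ M ⊗ M`.
-/

lemma Commute.conj_of_mul_eq_one {R : Type*} [Monoid R] {u v a b : R} (h : v * u = 1)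
    (hab : Commute a b) : Commute (u * a * v) (u * b * v) := by
  have conj_mul : ∀ x y : R, u * x * v * (u * y * v) = u * (x * y) * v := fun x y => by
    simp only [mul_assoc, ← mul_assoc v u, h, one_mul]
  show u * a * v * (u * b * v) = u * b * v * (u * a * v)
  rw [conj_mul, conj_mul, hab.eq]

lemma mul_mul_mul_eq_of_commute {R : Type*} [Monoid R] {p q y q' p' : R} (hq : Commute q y)
    (h : q * q' = 1) : p * q * y * (q' * p') = p * y * p' := by
  simp only [mul_assoc]
  rw [← mul_assoc q y, hq.eq, mul_assoc y, ← mul_assoc q q', h, one_mul]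

namespace Matrix

variable {n α : Type*} [Fintype n] [DecidableEq n] [CommSemiring α]

lemma IsDiag.commute {A B : Matrix n n α} (hA : A.IsDiag) (hB : B.IsDiag) : Commute A B := by
  rw [← hA.diagonal_diag, ← hB.diagonal_diag]
  exact commute_diagonal _ _

lemma IsDiag.mul {A B : Matrix n n α} (hA : A.IsDiag) (hB : B.IsDiag) : (A * B).IsDiag := by
  rw [← hA.diagonal_diag, ← hB.diagonal_diag, diagonal_mul_diagonal]
  exact isDiag_diagonal _

lemma commute_kronecker_one_one_kronecker {m : Type*} [Fintype m] [DecidableEq m]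
    (A : Matrix n n α) (B : Matrix m m α) : Commute (A ⊗ₖ (1 : Matrix m m α)) (1 ⊗ₖ B) := by
  simp only [Commute, SemiconjBy, ← mul_kronecker_mul, mul_one, one_mul]

end Matrix

lemma Matrix.reindex_prodComm_kronecker {R l m n p : Type*} [CommMagma R] (A : Matrix l m R)
    (B : Matrix n p R) :
    reindex (Equiv.prodComm l n) (Equiv.prodComm m p) (A ⊗ₖ B) = B ⊗ₖ A := by
  ext
  simp [mul_comm]

lemma swapOp_eq_toMatrix :
    swapOp = (Equiv.prodComm (Fin 2) (Fin 2)).toPEquiv.toMatrix := by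
  ext p q
  simp [swapOp, PEquiv.toMatrix_apply, Prod.ext_iff, eq_comm, and_comm]

lemma swapOp_mul_mul_swapOp (A : Matrix (Fin 2 × Fin 2) (Fin 2 × Fin 2) ℂ) :
    swapOp * A * swapOp = reindexAlgEquiv ℂ ℂ (Equiv.prodComm (Fin 2) (Fin 2)) A := by
  rw [swapOp_eq_toMatrix, PEquiv.toMatrix_toPEquiv_mul, PEquiv.mul_toMatrix_toPEquiv,
    submatrix_submatrix]
  rfl

lemma reindex_prodComm_cPhase (φ : ℝ) :
    reindex (Equiv.prodComm (Fin 2) (Fin 2)) (Equiv.prodComm (Fin 2) (Fin 2)) (cPhase φ) =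
      cPhase φ := by
  rw [cPhase, reindex_apply, submatrix_diagonal_equiv]
  congr
  funext ⟨i, j⟩
  simp [Prod.ext_iff, and_comm]

lemma swapOp_mul_Vdir_mul_swapOp (M : Matrix (Fin 2) (Fin 2) ℂ) (α β φ : ℝ) :
    swapOp * Vdir M α β φ * swapOp = Vdir M β α φ := by
  simp only [swapOp_mul_mul_swapOp, Vdir, map_mul, coe_reindexAlgEquiv,
    reindex_prodComm_kronecker, reindex_prodComm_cPhase]

lemma isDiag_phaseGate (θ : ℝ) : (phaseGate θ).IsDiag := by
  intro i j h
  fin_cases i <;> fin_cases j <;> simp_all [phaseGate]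

lemma isDiag_cPhase_mul_phaseGate_kronecker (α β φ : ℝ) :
    (cPhase φ * (phaseGate α ⊗ₖ phaseGate β)).IsDiag :=
  (isDiag_diagonal _).mul ((isDiag_phaseGate α).kronecker (isDiag_phaseGate β))

lemma Vdir_eq_conj (M : Matrix (Fin 2) (Fin 2) ℂ) (α β φ : ℝ) :
    Vdir M α β φ = (Mᴴ ⊗ₖ Mᴴ) * (cPhase φ * (phaseGate α ⊗ₖ phaseGate β)) * (M ⊗ₖ M) := by
  rw [Vdir, mul_assoc (Mᴴ ⊗ₖ Mᴴ)]

lemma commute_Vdir {M : Matrix (Fin 2) (Fin 2) ℂ} (hM : M * Mᴴ = 1) (α β φ α' β' φ' : ℝ) :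
    Commute (Vdir M α β φ) (Vdir M α' β' φ') := by
  rw [Vdir_eq_conj, Vdir_eq_conj]
  refine Commute.conj_of_mul_eq_one ?_ ((isDiag_cPhase_mul_phaseGate_kronecker α β φ).commute
    (isDiag_cPhase_mul_phaseGate_kronecker α' β' φ'))
  rw [← mul_kronecker_mul, hM, one_kronecker_one]

section ThreeQubits

local notation "I₂" => (1 : Matrix (Fin 2) (Fin 2) ℂ)
local notation "I₄" => (1 : Matrix (Fin 2 × Fin 2) (Fin 2 × Fin 2) ℂ)

lemma Matrix.IsDiag.opOn12 {X : Matrix (Fin 2 × Fin 2) (Fin 2 × Fin 2) ℂ} (hX : X.IsDiag) :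
    (opOn12 X).IsDiag :=
  (hX.kronecker isDiag_one).submatrix (Equiv.injective _)

lemma Matrix.IsDiag.opOn23 {X : Matrix (Fin 2 × Fin 2) (Fin 2 × Fin 2) ℂ} (hX : X.IsDiag) :
    (opOn23 X).IsDiag :=
  isDiag_one.kronecker hX

variable (X Y : Matrix (Fin 2 × Fin 2) (Fin 2 × Fin 2) ℂ)

lemma opOn12_eq_reindexAlgEquiv :
    opOn12 X = reindexAlgEquiv ℂ ℂ (Equiv.prodAssoc (Fin 2) (Fin 2) (Fin 2)) (X ⊗ₖ 1) :=
  rfl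

lemma opOn12_mul : opOn12 (X * Y) = opOn12 X * opOn12 Y := by
  simp only [opOn12_eq_reindexAlgEquiv, ← map_mul, ← mul_kronecker_mul, one_mul]

lemma opOn23_mul : opOn23 (X * Y) = opOn23 X * opOn23 Y := by
  rw [opOn23, opOn23, opOn23, ← mul_kronecker_mul, one_mul]

lemma opOn12_kronecker (A B : Matrix (Fin 2) (Fin 2) ℂ) : opOn12 (A ⊗ₖ B) = A ⊗ₖ (B ⊗ₖ I₂) :=
  kronecker_assoc A B 1

lemma commute_opOn12_one_kronecker_one_kronecker (N : Matrix (Fin 2) (Fin 2) ℂ) :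
    Commute (opOn12 X) (I₂ ⊗ₖ (I₂ ⊗ₖ N)) := by
  rw [← kronecker_assoc, one_kronecker_one, ← coe_reindexAlgEquiv ℂ, opOn12_eq_reindexAlgEquiv]
  exact (commute_kronecker_one_one_kronecker X N).map _

lemma commute_opOn23_kronecker_one (N : Matrix (Fin 2) (Fin 2) ℂ) :
    Commute (opOn23 X) (N ⊗ₖ I₄) :=
  (commute_kronecker_one_one_kronecker N X).symm

lemma opOn12_kronecker_mul_mul_kronecker {A B : Matrix (Fin 2) (Fin 2) ℂ} (h : A * B = 1) :
    opOn12 ((A ⊗ₖ A) * X * (B ⊗ₖ B)) = (A ⊗ₖ (A ⊗ₖ A)) * opOn12 X * (B ⊗ₖ (B ⊗ₖ B)) := by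
  have hA : A ⊗ₖ (A ⊗ₖ A) = A ⊗ₖ (A ⊗ₖ I₂) * (I₂ ⊗ₖ (I₂ ⊗ₖ A)) := by
    simp only [← mul_kronecker_mul, mul_one, one_mul]
  have hB : B ⊗ₖ (B ⊗ₖ B) = (I₂ ⊗ₖ (I₂ ⊗ₖ B)) * (B ⊗ₖ (B ⊗ₖ I₂)) := by
    simp only [← mul_kronecker_mul, mul_one, one_mul]
  have hAB : (I₂ ⊗ₖ (I₂ ⊗ₖ A)) * (I₂ ⊗ₖ (I₂ ⊗ₖ B)) = (1 : Matrix (Fin 2 × Fin 2 × Fin 2) _ ℂ) := by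
    simp only [← mul_kronecker_mul, mul_one, h, one_kronecker_one]
  rw [opOn12_mul, opOn12_mul, opOn12_kronecker, opOn12_kronecker, hA, hB,
    mul_mul_mul_eq_of_commute (commute_opOn12_one_kronecker_one_kronecker X A).symm hAB]

lemma opOn23_kronecker_mul_mul_kronecker {A B : Matrix (Fin 2) (Fin 2) ℂ} (h : A * B = 1) :
    opOn23 ((A ⊗ₖ A) * X * (B ⊗ₖ B)) = (A ⊗ₖ (A ⊗ₖ A)) * opOn23 X * (B ⊗ₖ (B ⊗ₖ B)) := by
  have hA : A ⊗ₖ (A ⊗ₖ A) = opOn23 (A ⊗ₖ A) * (A ⊗ₖ I₄) := by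
    simp only [opOn23, ← mul_kronecker_mul, mul_one, one_mul]
  have hB : B ⊗ₖ (B ⊗ₖ B) = (B ⊗ₖ I₄) * opOn23 (B ⊗ₖ B) := by
    simp only [opOn23, ← mul_kronecker_mul, mul_one, one_mul]
  have hAB : (A ⊗ₖ I₄) * (B ⊗ₖ I₄) = (1 : Matrix (Fin 2 × Fin 2 × Fin 2) _ ℂ) := by
    rw [← mul_kronecker_mul, mul_one, h, one_kronecker_one]
  rw [opOn23_mul, opOn23_mul, hA, hB, mul_mul_mul_eq_of_commute
    (commute_opOn23_kronecker_one X A).symm hAB]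

end ThreeQubits

lemma commute_opOn12_Vdir_opOn23_Vdir {M : Matrix (Fin 2) (Fin 2) ℂ} (hM : M * Mᴴ = 1)
    (α β φ α' β' φ' : ℝ) : Commute (opOn12 (Vdir M α β φ)) (opOn23 (Vdir M α' β' φ')) := by
  have hM' : Mᴴ * M = 1 := mul_eq_one_comm.mp hM
  rw [Vdir_eq_conj, Vdir_eq_conj, opOn12_kronecker_mul_mul_kronecker _ hM',
    opOn23_kronecker_mul_mul_kronecker _ hM']
  refine Commute.conj_of_mul_eq_one ?_ ((isDiag_cPhase_mul_phaseGate_kronecker α β φ).opOn12.commute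
    (isDiag_cPhase_mul_phaseGate_kronecker α' β' φ').opOn23)
  simp only [← mul_kronecker_mul, hM, one_kronecker_one]

/-- For `M` unitary, the operator `V = (Mᴴ⊗Mᴴ) Λ (P(α)⊗P(β)) (M⊗M)` satisfies all
directed consistency conditions D2, D3a, D3b, D3c. -/
theorem Vdir_satisfies_directed_conditions (M : Matrix (Fin 2) (Fin 2) ℂ)
    (hM : M * Mᴴ = 1) (α β φ : ℝ) :
    Vdir M α β φ * (swapOp * Vdir M α β φ * swapOp) =
        (swapOp * Vdir M α β φ * swapOp) * Vdir M α β φ ∧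
      opOn12 (Vdir M α β φ) * opOn23 (Vdir M α β φ) =
        opOn23 (Vdir M α β φ) * opOn12 (Vdir M α β φ) ∧
      opOn12 (Vdir M α β φ) * opOn23 (swapOp * Vdir M α β φ * swapOp) =
        opOn23 (swapOp * Vdir M α β φ * swapOp) * opOn12 (Vdir M α β φ) ∧
      opOn12 (swapOp * Vdir M α β φ * swapOp) * opOn23 (Vdir M α β φ) =
        opOn23 (Vdir M α β φ) * opOn12 (swapOp * Vdir M α β φ * swapOp) := by
  rw [swapOp_mul_Vdir_mul_swapOp]
  exact ⟨commute_Vdir hM .., commute_opOn12_Vdir_opOn23_Vdir hM ..,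
    commute_opOn12_Vdir_opOn23_Vdir hM .., commute_opOn12_Vdir_opOn23_Vdir hM ..⟩
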